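/- arXiv:2102.11681 — 2 statements merged into one kernel-verified Lean document; each statement's English description precedes it below -/
import Mathlib

section
/- Let h > 0, p, d ≥ 1 and R_1,…,R_p ∈ ℂ^{d×d} be matrices such that the block Vandermonde matrix V(e^{−hR_1},…,e^{−hR_p}) is invertible, where e^{−hR_k} denotes the matrix exponential. Define Ψ_1,…,Ψ_p ∈ ℂ^{d×d} by the block row identity [Ψ_p, Ψ_{p−1}, …, Ψ_1] = −[e^{−phR_1}, …, e^{−phR_p}] V(e^{−hR_1},…,e^{−hR_p})^{−1}. Then: (i) Ψ_p is invertible; (ii) defining Φ_j := −Ψ_p^{−1} Ψ_{p−j} for j = 1,…,p (with Ψ_0 := I_d), one has e^{phR_k} = Σ_{j=1}^p Φ_j e^{(p−j)hR_k} for every k = 1,…,p; equivalently, each e^{−hR_k} is a right solvent of the monic λ-matrix Ψ(λ) = I_d λ^p + Ψ_1 λ^{p−1} + … + Ψ_p. -/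
open Matrix

abbrev Mat (d e : ℕ) := Matrix (Fin d) (Fin e) ℂ

/-- The block Vandermonde matrix: the `(i,j)`-th `d×d` block is `S j ^ i` (0-indexed). -/
def vand (p d : ℕ) (S : Fin p → Mat d d) : Matrix (Fin p × Fin d) (Fin p × Fin d) ℂ :=
  fun x y => (S y.1 ^ (x.1 : ℕ)) x.2 y.2

/-- The block row `(e^{-phR_1}, …, e^{-phR_p})`. -/
noncomputable def expRow (p d : ℕ) (h : ℝ) (R : Fin p → Mat d d) :
    Matrix (Fin d) (Fin p × Fin d) ℂ :=
  fun a y => (NormedSpace.exp ((-((p : ℝ) * h) : ℂ) • R y.1)) a y.2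

/-- `S` is a right solvent of `I_d λ^p + Ψ_1 λ^{p-1} + … + Ψ_p`, where `Ψ i = Ψ_{i+1}`. -/
def IsRightSolvent (p d : ℕ) (Ψ : Fin p → Mat d d) (S : Mat d d) : Prop :=
  S ^ p + ∑ i : Fin p, Ψ i * S ^ (p - 1 - (i : ℕ)) = 0

/-- `ΨN p d Ψ n` is the coefficient `Ψ_n` (1-indexed), with the convention `Ψ_0 = I_d`,
where `Ψ i = Ψ_{i+1}`. -/
def ΨN (p d : ℕ) (Ψ : Fin p → Mat d d) (n : ℕ) : Mat d d :=
  if h0 : n = 0 then 1 else if h : n ≤ p then Ψ ⟨n - 1, by omega⟩ else 0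

/-! Multiplying the defining block row identity on the right by `V = V(E_1, …, E_p)`, where
`E_k = e^{-hR_k}`, gives `∑_j Ψ_{p-j} E_k^j = -E_k^p`: every `E_k` is a right solvent.
If `M Ψ_p = 0`, multiplying these identities by `M` on the left and cancelling one factor `E_k`
produces a block row annihilated by `V` whose last block is `M`, so `M = 0` and `Ψ_p` is
invertible. Multiplying the solvent identity on the right by `e^{phR_k} = E_k^{-p}` gives the
reversed identity `∑_{n=0}^p Ψ_n e^{nhR_k} = 0`, and solving it for the `Ψ_p` term
gives (ii). -/

open Finset

def blockRow {m ι n α : Type*} (X : ι → Matrix m n α) : Matrix m (ι × n) α :=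
  of fun a y => X y.1 a y.2

theorem blockRow_injective {m ι n α : Type*} :
    Function.Injective (blockRow : (ι → Matrix m n α) → Matrix m (ι × n) α) :=
  fun _ _ h => funext fun i => Matrix.ext fun a b => congrFun (congrFun h a) (i, b)

theorem blockRow_neg {m ι n α : Type*} [Neg α] (X : ι → Matrix m n α) :
    blockRow (-X) = -blockRow X :=
  rfl

theorem blockRow_mul_vand {m : Type*} {p d : ℕ} (X : Fin p → Matrix m (Fin d) ℂ)
    (S : Fin p → Mat d d) :
    blockRow X * vand p d S = blockRow fun k => ∑ j, X j * S k ^ (j : ℕ) := by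
  ext a ⟨k, c⟩
  simp [blockRow, vand, mul_apply, Fintype.sum_prod_type, Matrix.sum_apply]

theorem eq_zero_of_forall_sum_mul_pow_eq_zero {m : Type*} {p d : ℕ} {S : Fin p → Mat d d}
    (hV : IsUnit (vand p d S)) {X : ℕ → Matrix m (Fin d) ℂ}
    (hX : ∀ k, ∑ j ∈ range p, X j * S k ^ j = 0) {j : ℕ} (hj : j < p) : X j = 0 := by
  have hXV : blockRow (fun i : Fin p => X i) * vand p d S = 0 := by
    rw [blockRow_mul_vand]
    ext a ⟨k, c⟩
    simp [blockRow, Fin.sum_univ_eq_sum_range (fun j => X j * S k ^ j), hX k]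
  have hX0 := congrArg (· * (vand p d S)⁻¹) hXV
  simp only [mul_nonsing_inv_cancel_right _ _ ((isUnit_iff_isUnit_det _).mp hV)] at hX0
  ext a b
  simpa [blockRow] using congrFun (congrFun hX0 a) (⟨j, hj⟩, b)

theorem isRightSolvent_of_blockRow_mul_vand {p d : ℕ} {Ψ S : Fin p → Mat d d}
    (h : blockRow (fun j : Fin p => Ψ j.rev) * vand p d S = -blockRow fun k => S k ^ p)
    (k : Fin p) : IsRightSolvent p d Ψ (S k) := by
  rw [blockRow_mul_vand, ← blockRow_neg] at h
  have hk : ∑ j : Fin p, Ψ j.rev * S k ^ (j : ℕ) = -(S k ^ p) :=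
    congrFun (blockRow_injective h) k
  have hrev :
      ∑ i : Fin p, Ψ i * S k ^ (p - 1 - (i : ℕ)) =
        ∑ j : Fin p, Ψ j.rev * S k ^ (j : ℕ) := by
    rw [← Equiv.sum_comp Fin.revPerm]
    refine sum_congr rfl fun j _ => ?_
    simp only [Fin.revPerm_apply, Fin.val_rev]
    congr 2
    omega
  rw [IsRightSolvent, hrev, hk, add_neg_cancel]

theorem ΨN_self {p d : ℕ} (Ψ : Fin p → Mat d d) (hp : 0 < p) :
    ΨN p d Ψ p = Ψ ⟨p - 1, Nat.sub_one_lt_of_lt hp⟩ := by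
  simp [ΨN, hp.ne']

theorem IsRightSolvent.sum_ΨN_mul_pow_sub {p d : ℕ} {Ψ : Fin p → Mat d d} {S : Mat d d}
    (hS : IsRightSolvent p d Ψ S) : ∑ n ∈ range (p + 1), ΨN p d Ψ n * S ^ (p - n) = 0 := by
  have hsucc : ∀ i : Fin p, ΨN p d Ψ (i + 1) * S ^ (p - (i + 1)) = Ψ i * S ^ (p - 1 - i) := by
    intro i
    simp [ΨN, Nat.succ_le_of_lt i.isLt, Nat.sub_add_eq, Nat.sub_right_comm p]
  rw [sum_range_succ',
    ← Fin.sum_univ_eq_sum_range (fun n => ΨN p d Ψ (n + 1) * S ^ (p - (n + 1))), add_comm]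
  simp only [hsucc]
  rw [show ΨN p d Ψ 0 = 1 from dif_pos rfl, one_mul, Nat.sub_zero]
  exact hS

theorem pow_sub_mul_pow_of_mul_eq_one {M : Type*} [Monoid M] {a b : M} (hab : a * b = 1)
    (hba : b * a = 1) {n p : ℕ} (hn : n ≤ p) : a ^ (p - n) * b ^ p = b ^ n := by
  rw [← pow_sub_mul_pow b hn, ← mul_assoc,
    ← (show Commute a b from hab.trans hba.symm).mul_pow, hab, one_pow, one_mul]

theorem IsRightSolvent.sum_ΨN_mul_pow {p d : ℕ} {Ψ : Fin p → Mat d d} {S T : Mat d d}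
    (hS : IsRightSolvent p d Ψ S) (hST : S * T = 1) (hTS : T * S = 1) :
    ∑ n ∈ range (p + 1), ΨN p d Ψ n * T ^ n = 0 :=
  calc ∑ n ∈ range (p + 1), ΨN p d Ψ n * T ^ n
      = (∑ n ∈ range (p + 1), ΨN p d Ψ n * S ^ (p - n)) * T ^ p := by
        rw [sum_mul]
        refine sum_congr rfl fun n hn => ?_
        rw [mul_assoc,
          pow_sub_mul_pow_of_mul_eq_one hST hTS (Nat.lt_succ_iff.mp (mem_range.mp hn))]
    _ = 0 := by rw [hS.sum_ΨN_mul_pow_sub, zero_mul]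

theorem isUnit_of_forall_isRightSolvent {p d : ℕ} (hp : 0 < p) {Ψ S : Fin p → Mat d d}
    (hV : IsUnit (vand p d S)) (hS : ∀ k, IsRightSolvent p d Ψ (S k))
    (hSu : ∀ k, IsUnit (S k)) : IsUnit (Ψ ⟨p - 1, Nat.sub_one_lt_of_lt hp⟩) := by
  rw [IsArtinianRing.isUnit_iff_isRightRegular, isRightRegular_iff_left_eq_zero_of_mul]
  intro M hM
  have hX : ∀ k, ∑ j ∈ range p, M * ΨN p d Ψ (p - 1 - j) * S k ^ j = 0 := by
    intro k
    have hsum : (∑ n ∈ range p, M * ΨN p d Ψ n * S k ^ (p - 1 - n)) * S k = 0 :=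
      calc _ = M * ∑ n ∈ range (p + 1), ΨN p d Ψ n * S k ^ (p - n) := by
            rw [sum_range_succ, mul_add, ΨN_self Ψ hp, ← mul_assoc, hM, zero_mul, add_zero,
              sum_mul, mul_sum]
            refine sum_congr rfl fun n hn => ?_
            rw [mul_assoc, mul_assoc, ← pow_succ]
            congr 3
            have := mem_range.mp hn
            omega
        _ = 0 := by rw [(hS k).sum_ΨN_mul_pow_sub, mul_zero]
    rw [← (hSu k).mul_left_eq_zero.mp hsum,
      ← sum_range_reflect (fun n => M * ΨN p d Ψ n * S k ^ (p - 1 - n))]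
    refine sum_congr rfl fun j hj => ?_
    rw [Nat.sub_sub_self (by have := mem_range.mp hj; omega)]
  simpa [ΨN] using eq_zero_of_forall_sum_mul_pow_eq_zero hV
    (X := fun j => M * ΨN p d Ψ (p - 1 - j)) hX (j := p - 1) (by omega)

theorem IsRightSolvent.pow_eq_sum {p d : ℕ} (hp : 0 < p) {Ψ : Fin p → Mat d d} {S T : Mat d d}
    (hS : IsRightSolvent p d Ψ S) (hST : S * T = 1) (hTS : T * S = 1)
    (hΨ : IsUnit (Ψ ⟨p - 1, Nat.sub_one_lt_of_lt hp⟩)) :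
    T ^ p = ∑ j : Fin p,
      (-(Ψ ⟨p - 1, Nat.sub_one_lt_of_lt hp⟩)⁻¹ * ΨN p d Ψ (p - 1 - j)) *
        T ^ (p - 1 - j) := by
  have h := hS.sum_ΨN_mul_pow hST hTS
  rw [sum_range_succ, ΨN_self Ψ hp] at h
  simp only [mul_assoc, ← mul_sum]
  rw [Fin.sum_univ_eq_sum_range (fun j => ΨN p d Ψ (p - 1 - j) * T ^ (p - 1 - j)),
    sum_range_reflect (fun n => ΨN p d Ψ n * T ^ n), eq_neg_of_add_eq_zero_left h, neg_mul_neg,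
    nonsing_inv_mul_cancel_left _ _ ((isUnit_iff_isUnit_det _).mp hΨ)]

theorem exp_natCast_mul_smul {m : Type*} [Fintype m] [DecidableEq m] (n : ℕ) (z : ℂ)
    (A : Matrix m m ℂ) : NormedSpace.exp ((n * z) • A) = NormedSpace.exp (z • A) ^ n := by
  rw [← Matrix.exp_nsmul, ← Nat.cast_smul_eq_nsmul ℂ, smul_smul]

theorem stmt_4 (p d : ℕ) (hp : 0 < p) (h : ℝ)
    (R : Fin p → Mat d d)
    (hV : IsUnit (vand p d (fun k => NormedSpace.exp ((-h : ℂ) • R k))))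
    -- `[Ψ_p, Ψ_{p-1}, …, Ψ_1] = -[e^{-phR_1}, …, e^{-phR_p}] V(e^{-hR_1},…,e^{-hR_p})⁻¹`,
    -- i.e. the `j`-th block column (0-indexed) of the right-hand side is `Ψ_{p-j}`,
    -- i.e. `Ψ j.rev` with `Ψ i = Ψ_{i+1}`
    (Ψ : Fin p → Mat d d)
    (hΨ : ∀ (j : Fin p) (a b : Fin d),
      Ψ j.rev a b =
        (-(expRow p d h R *
            (vand p d (fun k => NormedSpace.exp ((-h : ℂ) • R k)))⁻¹)) a (j, b)) :
    -- (i) `Ψ_p` is invertible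
    IsUnit (Ψ ⟨p - 1, by omega⟩) ∧
    -- (ii) with `Φ_j := -Ψ_p⁻¹ Ψ_{p-j}` one has `e^{phR_k} = ∑_{j=1}^p Φ_j e^{(p-j)hR_k}`
    (∀ k : Fin p,
      NormedSpace.exp ((((p : ℝ) * h : ℝ) : ℂ) • R k) =
        ∑ j : Fin p,
          (-(Ψ ⟨p - 1, by omega⟩)⁻¹ * ΨN p d Ψ (p - 1 - (j : ℕ))) *
            NormedSpace.exp (((((p - 1 - (j : ℕ) : ℕ) : ℝ) * h : ℝ) : ℂ) • R k)) ∧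
    -- equivalently, each `e^{-hR_k}` is a right solvent of `Ψ(λ)`
    (∀ k : Fin p, IsRightSolvent p d Ψ (NormedSpace.exp ((-h : ℂ) • R k))) := by
  set E : Fin p → Mat d d := fun k => NormedSpace.exp ((-h : ℂ) • R k)
  set F : Fin p → Mat d d := fun k => NormedSpace.exp ((h : ℂ) • R k)
  have hEF : ∀ k, E k * F k = 1 := fun k => by
    simp only [E, F, neg_smul, Matrix.exp_neg]
    exact nonsing_inv_mul _ ((isUnit_iff_isUnit_det _).mp (Matrix.isUnit_exp _))
  have hFE : ∀ k, F k * E k = 1 := fun k => by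
    simp only [E, F, neg_smul, Matrix.exp_neg]
    exact mul_nonsing_inv _ ((isUnit_iff_isUnit_det _).mp (Matrix.isUnit_exp _))
  have hrow : blockRow (fun j : Fin p => Ψ j.rev) = -(expRow p d h R * (vand p d E)⁻¹) := by
    ext a ⟨j, b⟩
    exact hΨ j a b
  have hexpRow : expRow p d h R = blockRow fun k => E k ^ p := by
    ext a ⟨k, b⟩
    simp only [expRow, blockRow, of_apply, E, ← exp_natCast_mul_smul]
    push_cast
    ring_nf
  have hsolv : ∀ k, IsRightSolvent p d Ψ (E k) := isRightSolvent_of_blockRow_mul_vand <| by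
    rw [hrow, Matrix.neg_mul, nonsing_inv_mul_cancel_right _ _ ((isUnit_iff_isUnit_det _).mp hV),
      hexpRow]
  have hunit := isUnit_of_forall_isRightSolvent hp hV hsolv fun k => Matrix.isUnit_exp _
  refine ⟨hunit, fun k => ?_, hsolv⟩
  push_cast
  simp only [exp_natCast_mul_smul]
  exact (hsolv k).pow_eq_sum hp (hEF k) (hFE k) hunit
end

section
/- Let p, d ≥ 1 and S_1,…,S_p ∈ ℂ^{d×d} be matrices such that the block Vandermonde matrix V(S_1,…,S_p) is invertible. Define Ψ_1,…,Ψ_p ∈ ℂ^{d×d} by [Ψ_p, Ψ_{p−1}, …, Ψ_1] = −[S_1^p, …, S_p^p] V(S_1,…,S_p)^{−1}. Then each S_k is a right solvent of Ψ(λ) = I_d λ^p + Ψ_1 λ^{p−1} + … + Ψ_p, and Ψ(λ) is the unique monic λ-matrix of degree p and order d having S_1,…,S_p as right solvents: if Ψ'(λ) = I_d λ^p + Ψ'_1 λ^{p−1} + … + Ψ'_p also has each S_k as a right solvent, then Ψ'_j = Ψ_j for all j = 1,…,p. -/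
open Matrix

/-- The block row `(S 0 ^ p, …, S (p-1) ^ p)`. -/
def powRow (p d : ℕ) (S : Fin p → Mat d d) : Matrix (Fin d) (Fin p × Fin d) ℂ :=
  fun a y => (S y.1 ^ p) a y.2

/-! A monic λ-matrix `Ψ` has `S_k` as a right solvent exactly when the `k`-th block column of
`[Ψ_p, …, Ψ_1] V(S_1,…,S_p)` equals `-S_k^p`. So all the `S_k` are right solvents iff the
coefficient row solves the linear system `[Ψ_p, …, Ψ_1] V = -[S_1^p, …, S_p^p]`, which has
exactly one solution when `V` is invertible. -/

/-- The block row `[Φ_p, …, Φ_1]`, with `Φ i = Φ_{i+1}`. -/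
def coeffRow (p d : ℕ) (Φ : Fin p → Mat d d) : Matrix (Fin d) (Fin p × Fin d) ℂ :=
  fun a y => Φ y.1.rev a y.2

lemma coeffRow_injective (p d : ℕ) : Function.Injective (coeffRow p d) := by
  intro Φ Φ' h
  funext j
  ext a b
  simpa [coeffRow, Fin.rev_rev] using congr_fun₂ h a (j.rev, b)

lemma coeffRow_mul_vand_apply (p d : ℕ) (S Φ : Fin p → Mat d d) (k : Fin p) (a b : Fin d) :
    (coeffRow p d Φ * vand p d S) a (k, b)
      = (∑ i : Fin p, Φ i * S k ^ (p - 1 - (i : ℕ))) a b := by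
  rw [mul_apply, Matrix.sum_apply, Fintype.sum_prod_type, ← Equiv.sum_comp Fin.revPerm]
  refine Finset.sum_congr rfl fun j _ => ?_
  rw [mul_apply]
  refine Finset.sum_congr rfl fun c _ => ?_
  simp [coeffRow, vand, Fin.val_rev, Nat.sub_sub, Nat.add_comm 1]

lemma forall_isRightSolvent_iff_coeffRow_mul_vand (p d : ℕ) (S Φ : Fin p → Mat d d) :
    (∀ k, IsRightSolvent p d Φ (S k)) ↔ coeffRow p d Φ * vand p d S = -powRow p d S := by
  simp only [IsRightSolvent, add_eq_zero_iff_eq_neg', ← Matrix.ext_iff, Prod.forall,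
    coeffRow_mul_vand_apply]
  rw [forall_comm]
  rfl

theorem stmt_5_general (p d : ℕ)
    (S : Fin p → Mat d d) (hV : IsUnit (vand p d S))
    -- `[Ψ_p, Ψ_{p-1}, …, Ψ_1] = -[S_1^p, …, S_p^p] V(S_1,…,S_p)⁻¹`, i.e. the `j`-th block
    -- column (0-indexed) of the right-hand side is `Ψ_{p-j}`, i.e. `Ψ j.rev` with `Ψ i = Ψ_{i+1}`
    (Ψ : Fin p → Mat d d)
    (hΨ : ∀ (j : Fin p) (a b : Fin d),
      Ψ j.rev a b = (-(powRow p d S * (vand p d S)⁻¹)) a (j, b)) :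
    (∀ k : Fin p, IsRightSolvent p d Ψ (S k)) ∧
    ∀ Ψ' : Fin p → Mat d d, (∀ k : Fin p, IsRightSolvent p d Ψ' (S k)) → Ψ' = Ψ := by
  let := hV.invertible
  have hRow : coeffRow p d Ψ = -powRow p d S * (vand p d S)⁻¹ := by
    ext a ⟨j, b⟩
    rw [Matrix.neg_mul]
    exact hΨ j a b
  have solvents_iff (Φ : Fin p → Mat d d) :
      (∀ k, IsRightSolvent p d Φ (S k)) ↔ coeffRow p d Φ = coeffRow p d Ψ := by
    rw [forall_isRightSolvent_iff_coeffRow_mul_vand, hRow,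
      eq_comm (a := coeffRow p d Φ), mul_inv_eq_iff_eq_mul_of_invertible, eq_comm]
  exact ⟨(solvents_iff Ψ).2 rfl, fun Ψ' h => coeffRow_injective p d ((solvents_iff Ψ').1 h)⟩

theorem stmt_5 (p d : ℕ) (hp : 0 < p) (hd : 0 < d)
    (S : Fin p → Mat d d) (hV : IsUnit (vand p d S))
    -- `[Ψ_p, Ψ_{p-1}, …, Ψ_1] = -[S_1^p, …, S_p^p] V(S_1,…,S_p)⁻¹`, i.e. the `j`-th block
    -- column (0-indexed) of the right-hand side is `Ψ_{p-j}`, i.e. `Ψ j.rev` with `Ψ i = Ψ_{i+1}`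
    (Ψ : Fin p → Mat d d)
    (hΨ : ∀ (j : Fin p) (a b : Fin d),
      Ψ j.rev a b = (-(powRow p d S * (vand p d S)⁻¹)) a (j, b)) :
    (∀ k : Fin p, IsRightSolvent p d Ψ (S k)) ∧
    ∀ Ψ' : Fin p → Mat d d, (∀ k : Fin p, IsRightSolvent p d Ψ' (S k)) → Ψ' = Ψ :=
  stmt_5_general p d S hV Ψ hΨ
end
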